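/- arXiv:1407.0430 — 5 statements merged into one kernel-verified Lean document; each statement's English description precedes it below -/
import Mathlib

section
/- Suppose α₁, α₂ solve the coupled Riccati system: α₁' = (b₁²/m₁)α₁² + (2a+f₂²)α₁ + (b₂²/m₂)α₁α₂ - l₁, α₂' = (b₂²/m₂)α₂² + (2a+f₂²)α₂ + (b₁²/m₁)α₁α₂ - l₂, with α₁(0) = -r₁, α₂(0) = -r₂, under the condition b₁²/m₁ = b₂²/m₂ pointwise. Suppose β₁, β₂ solve the linear system β₁' = (a + (b₁²/m₁)α₁ + f₂²)β₁ + (b₂²/m₂)α₁β₂ + (b₁n₁+b₂n₂+c)α₁ + l₁k₁ and β₂' = (a + (b₂²/m₂)α₂ + f₂²)β₂ + (b₁²/m₁)α₂β₁ + (b₁n₁+b₂n₂+c)α₂ + l₂k₂ with β₁(0) = r₁h₁, β₂(0) = r₂h₂. Then β := β₁ + β₂ satisfies β' = (a + (b₁²/m₁)(α₁+α₂) + f₂²)β + (b₁n₁+b₂n₂+c)(α₁+α₂) + l₁k₁ + l₂k₂ with β(0) = r₁h₁ + r₂h₂. -/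
open Set

theorem beta_sum_general (T : ℝ) (r₁ r₂ h₁ h₂ : ℝ)
    (a b₁ b₂ m₁ m₂ f₂ l₁ l₂ k₁ k₂ n₁ n₂ c α₁ α₂ β₁ β₂ : ℝ → ℝ)
    (hsym : ∀ t ∈ Icc (0:ℝ) T, b₁ t ^ 2 / m₁ t = b₂ t ^ 2 / m₂ t)
    (hβ₁0 : β₁ 0 = r₁ * h₁) (hβ₂0 : β₂ 0 = r₂ * h₂)
    (hβ₁ : ∀ t ∈ Icc (0:ℝ) T, HasDerivAt β₁
      ((a t + b₁ t ^ 2 / m₁ t * α₁ t + f₂ t ^ 2) * β₁ t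
        + b₂ t ^ 2 / m₂ t * α₁ t * β₂ t
        + (b₁ t * n₁ t + b₂ t * n₂ t + c t) * α₁ t + l₁ t * k₁ t) t)
    (hβ₂ : ∀ t ∈ Icc (0:ℝ) T, HasDerivAt β₂
      ((a t + b₂ t ^ 2 / m₂ t * α₂ t + f₂ t ^ 2) * β₂ t
        + b₁ t ^ 2 / m₁ t * α₂ t * β₁ t
        + (b₁ t * n₁ t + b₂ t * n₂ t + c t) * α₂ t + l₂ t * k₂ t) t) :
    (∀ t ∈ Icc (0:ℝ) T, HasDerivAt (fun s => β₁ s + β₂ s)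
      ((a t + b₁ t ^ 2 / m₁ t * (α₁ t + α₂ t) + f₂ t ^ 2) * (β₁ t + β₂ t)
        + (b₁ t * n₁ t + b₂ t * n₂ t + c t) * (α₁ t + α₂ t)
        + l₁ t * k₁ t + l₂ t * k₂ t) t)
    ∧ β₁ 0 + β₂ 0 = r₁ * h₁ + r₂ * h₂ := by
  refine ⟨fun t ht => ?_, by rw [hβ₁0, hβ₂0]⟩
  -- With a common coupling coefficient the cross terms of the two equations merge.
  refine ((hβ₁ t ht).add (hβ₂ t ht)).congr_deriv ?_
  rw [hsym t ht]
  ring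

theorem beta_sum (T : ℝ) (hT : 0 < T) (r₁ r₂ h₁ h₂ : ℝ)
    (a b₁ b₂ m₁ m₂ f₂ l₁ l₂ k₁ k₂ n₁ n₂ c α₁ α₂ β₁ β₂ : ℝ → ℝ)
    (hm₁ : ∀ t ∈ Icc (0:ℝ) T, 0 < m₁ t) (hm₂ : ∀ t ∈ Icc (0:ℝ) T, 0 < m₂ t)
    (hr₁ : 0 ≤ r₁) (hr₂ : 0 ≤ r₂)
    (hsym : ∀ t ∈ Icc (0:ℝ) T, b₁ t ^ 2 / m₁ t = b₂ t ^ 2 / m₂ t)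
    (hα₁0 : α₁ 0 = -r₁) (hα₂0 : α₂ 0 = -r₂)
    (hα₁ : ∀ t ∈ Icc (0:ℝ) T, HasDerivAt α₁
      (b₁ t ^ 2 / m₁ t * α₁ t ^ 2 + (2 * a t + f₂ t ^ 2) * α₁ t
        + b₂ t ^ 2 / m₂ t * (α₁ t * α₂ t) - l₁ t) t)
    (hα₂ : ∀ t ∈ Icc (0:ℝ) T, HasDerivAt α₂
      (b₂ t ^ 2 / m₂ t * α₂ t ^ 2 + (2 * a t + f₂ t ^ 2) * α₂ t
        + b₁ t ^ 2 / m₁ t * (α₁ t * α₂ t) - l₂ t) t)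
    (hβ₁0 : β₁ 0 = r₁ * h₁) (hβ₂0 : β₂ 0 = r₂ * h₂)
    (hβ₁ : ∀ t ∈ Icc (0:ℝ) T, HasDerivAt β₁
      ((a t + b₁ t ^ 2 / m₁ t * α₁ t + f₂ t ^ 2) * β₁ t
        + b₂ t ^ 2 / m₂ t * α₁ t * β₂ t
        + (b₁ t * n₁ t + b₂ t * n₂ t + c t) * α₁ t + l₁ t * k₁ t) t)
    (hβ₂ : ∀ t ∈ Icc (0:ℝ) T, HasDerivAt β₂
      ((a t + b₂ t ^ 2 / m₂ t * α₂ t + f₂ t ^ 2) * β₂ t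
        + b₁ t ^ 2 / m₁ t * α₂ t * β₁ t
        + (b₁ t * n₁ t + b₂ t * n₂ t + c t) * α₂ t + l₂ t * k₂ t) t) :
    (∀ t ∈ Icc (0:ℝ) T, HasDerivAt (fun s => β₁ s + β₂ s)
      ((a t + b₁ t ^ 2 / m₁ t * (α₁ t + α₂ t) + f₂ t ^ 2) * (β₁ t + β₂ t)
        + (b₁ t * n₁ t + b₂ t * n₂ t + c t) * (α₁ t + α₂ t)
        + l₁ t * k₁ t + l₂ t * k₂ t) t)
    ∧ β₁ 0 + β₂ 0 = r₁ * h₁ + r₂ * h₂ :=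
  beta_sum_general T r₁ r₂ h₁ h₂ a b₁ b₂ m₁ m₂ f₂ l₁ l₂ k₁ k₂ n₁ n₂ c α₁ α₂ β₁ β₂ hsym hβ₁0 hβ₂0 hβ₁
    hβ₂
end

section
/- Let a, f₂, l₁, l₂, m₁, b₁ : [0,T] → ℝ be continuous and bounded with l₁, l₂ ≥ 0, m₁ > 0, and r₁, r₂ ≥ 0. Then the scalar Riccati equation α'(t) = (b₁(t)²/m₁(t))α(t)² + (2a(t)+f₂(t)²)α(t) - (l₁(t)+l₂(t)), α(0) = -(r₁+r₂), has a unique solution on [0,T], and this solution satisfies α(t) ≤ 0 for all t ∈ [0,T]. -/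
open Set Metric
open scoped NNReal

/-!
The field `p x² + q x - l` is Lipschitz on bounded sets, which gives uniqueness. For existence,
compose it with the projection onto `[-M, 0]`: the result is globally Lipschitz and bounded, so
Picard–Lindelöf solves it on the whole interval. For `x ≥ 0` the truncated field is `-l ≤ 0`,
so the solution never becomes positive. For `x ≤ 0` the term `p x²` only pushes the solution up,
so `-α' ≤ Q (-α) + L` and Grönwall bounds `-α`; choosing `M` to be this bound, the truncation is
never active and the solution of the truncated problem solves the Riccati equation.
-/

theorem image_nonpos_of_deriv_right_nonpos_of_pos {f f' : ℝ → ℝ} {a b : ℝ}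
    (hf : ContinuousOn f (Icc a b)) (hf' : ∀ x ∈ Ico a b, HasDerivWithinAt f (f' x) (Ici x) x)
    (ha : f a ≤ 0) (hpos : ∀ x ∈ Ico a b, 0 < f x → f' x ≤ 0) :
    ∀ x ∈ Icc a b, f x ≤ 0 := by
  intro x hx
  have hx₀ : 0 < 1 + (x - a) := by linarith [hx.1]
  -- `f` stays below every barrier `δ (1 + (t - a))`, because it could only cross one going up.
  have barrier : ∀ δ > 0, f x ≤ δ * (1 + (x - a)) := fun δ hδ =>
    image_le_of_deriv_right_lt_deriv_boundary hf hf' (B := fun t => δ * (1 + (t - a)))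
      (by simpa using ha.trans hδ.le)
      (fun t => by simpa using ((hasDerivAt_id t).sub_const a).const_add 1 |>.const_mul δ)
      (fun t ht hft => (hpos t ht (hft ▸ by nlinarith [ht.1])).trans_lt hδ) hx
  refine le_of_forall_pos_le_add fun ε hε => ?_
  simpa [div_mul_cancel₀ _ hx₀.ne'] using barrier (ε / (1 + (x - a))) (by positivity)

theorem exists_forall_mem_Icc_hasDerivAt_of_lipschitzWith {E : Type*} [NormedAddCommGroup E]
    [NormedSpace ℝ E] [CompleteSpace E] {v : ℝ → E → E} {a b : ℝ} (hab : a ≤ b) {K C : ℝ≥0}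
    (x₀ : E) (hv : ∀ t ∈ Icc a b, LipschitzWith K (v t))
    (hcont : ∀ x, ContinuousOn (v · x) (Icc a b)) (hC : ∀ t ∈ Icc a b, ∀ x, ‖v t x‖ ≤ C) :
    ∃ α : ℝ → E, α a = x₀ ∧ ∀ t ∈ Icc a b, HasDerivAt α (v t (α t)) t := by
  -- Freezing `v` outside `[a, b]` lets Picard–Lindelöf run on the larger interval `[a - 1, b + 1]`,
  -- which gives two-sided derivatives at the endpoints.
  have hproj : ∀ t, (projIcc a b hab t : ℝ) ∈ Icc a b := fun t => (projIcc a b hab t).2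
  have hw : IsPicardLindelof (fun t => v (projIcc a b hab t)) (tmin := a - 1) (tmax := b + 1)
      ⟨a, by constructor <;> linarith⟩ x₀ (C * (b - a + 2).toNNReal) 0 C K :=
    { lipschitzOnWith := fun t _ => (hv _ (hproj t)).lipschitzOnWith
      continuousOn := fun x _ =>
        ((hcont x).comp_continuous continuous_projIcc.subtype_val hproj).continuousOn
      norm_le := fun t _ x _ => hC _ (hproj t) x
      mul_max_le := by
        rw [NNReal.coe_mul, Real.coe_toNNReal _ (by linarith), NNReal.coe_zero, sub_zero]
        gcongr
        exact max_le (by linarith) (by linarith) }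
  obtain ⟨α, hα₀, hα⟩ := hw.exists_eq_forall_mem_Icc_hasDerivWithinAt₀
  refine ⟨α, hα₀, fun t ht => ?_⟩
  have := (hα t ⟨by linarith [ht.1], by linarith [ht.2]⟩).hasDerivAt
    (Icc_mem_nhds (by linarith [ht.1]) (by linarith [ht.2]))
  rwa [projIcc_of_mem hab ht] at this

theorem lipschitzOnWith_quadratic {a b c P Q M : ℝ} (ha : |a| ≤ P) (hb : |b| ≤ Q) :
    LipschitzOnWith (2 * P * M + Q).toNNReal (fun x => a * x ^ 2 + b * x - c)
      (closedBall 0 M) := by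
  refine LipschitzOnWith.of_dist_le' fun x hx y hy => ?_
  rw [mem_closedBall_zero_iff, Real.norm_eq_abs] at hx hy
  rw [Real.dist_eq, Real.dist_eq]
  calc |a * x ^ 2 + b * x - c - (a * y ^ 2 + b * y - c)| = |a * (x + y) + b| * |x - y| := by
        rw [← abs_mul]; congr 1; ring
    _ ≤ (|a| * (|x| + |y|) + |b|) * |x - y| := by
        gcongr
        exact (abs_add_le _ _).trans (by rw [abs_mul]; gcongr; exact abs_add_le _ _)
    _ ≤ (P * (M + M) + Q) * |x - y| := by
        have hP : 0 ≤ P := (abs_nonneg a).trans ha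
        gcongr
    _ = (2 * P * M + Q) * |x - y| := by ring

theorem abs_quadratic_le {a b c x P Q L M : ℝ} (ha : |a| ≤ P) (hb : |b| ≤ Q) (hc : |c| ≤ L)
    (hx : |x| ≤ M) : |a * x ^ 2 + b * x - c| ≤ P * M ^ 2 + Q * M + L := by
  calc |a * x ^ 2 + b * x - c| ≤ |a| * |x| ^ 2 + |b| * |x| + |c| := by
        rw [← abs_pow, ← abs_mul, ← abs_mul]
        exact (abs_sub _ _).trans (by gcongr; exact abs_add_le _ _)
    _ ≤ P * M ^ 2 + Q * M + L := by
        have hP : 0 ≤ P := (abs_nonneg a).trans ha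
        have hQ : 0 ≤ Q := (abs_nonneg b).trans hb
        gcongr

theorem neg_quadratic_le {a b c x y Q L : ℝ} (ha : 0 ≤ a) (hb : |b| ≤ Q) (hc : c ≤ L)
    (hxy : x ≤ y) (hy : y ≤ 0) : -(a * y ^ 2 + b * y - c) ≤ Q * -x + L := by
  have hby : b * -y ≤ Q * -x :=
    (mul_le_mul_of_nonneg_right ((le_abs_self b).trans hb) (by linarith)).trans
      (mul_le_mul_of_nonneg_left (by linarith) ((abs_nonneg b).trans hb))
  nlinarith [mul_nonneg ha (sq_nonneg y)]

def riccatiField (p q l : ℝ → ℝ) (t x : ℝ) : ℝ := p t * x ^ 2 + q t * x - l t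

section Truncation

variable {p q l : ℝ → ℝ} {a b t M P Q L : ℝ} (hM : -M ≤ 0)

theorem lipschitzWith_riccatiField_projIcc (hp : |p t| ≤ P) (hq : |q t| ≤ Q) :
    LipschitzWith (2 * P * M + Q).toNNReal
      (fun x => riccatiField p q l t (projIcc (-M) 0 hM x)) := by
  have hsub : Icc (-M) 0 ⊆ closedBall 0 M := by
    rw [Real.closedBall_eq_Icc, zero_sub, zero_add]
    exact Icc_subset_Icc_right (by linarith)
  have := (lipschitzOnWith_iff_restrict.1 ((lipschitzOnWith_quadratic (M := M) (c := l t)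
    hp hq).mono hsub)).comp (LipschitzWith.projIcc hM)
  rwa [mul_one] at this

theorem abs_riccatiField_projIcc_le (hp : |p t| ≤ P) (hq : |q t| ≤ Q) (hl : |l t| ≤ L) (x : ℝ) :
    |riccatiField p q l t (projIcc (-M) 0 hM x)| ≤ P * M ^ 2 + Q * M + L :=
  abs_quadratic_le hp hq hl
    (abs_le.2 ⟨(projIcc (-M) 0 hM x).2.1, (projIcc (-M) 0 hM x).2.2.trans (by linarith)⟩)

theorem nonpos_of_hasDerivAt_riccatiField_projIcc {α : ℝ → ℝ} (hα₀ : α a ≤ 0)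
    (hl : ∀ t ∈ Icc a b, 0 ≤ l t)
    (hα : ∀ t ∈ Icc a b, HasDerivAt α (riccatiField p q l t (projIcc (-M) 0 hM (α t))) t) :
    ∀ t ∈ Icc a b, α t ≤ 0 := by
  refine image_nonpos_of_deriv_right_nonpos_of_pos
    (HasDerivAt.continuousOn hα) (fun t ht => (hα t (Ico_subset_Icc_self ht)).hasDerivWithinAt)
    hα₀ fun t ht hpos => ?_
  rw [projIcc_of_right_le hM hpos.le]
  simpa [riccatiField] using hl t (Ico_subset_Icc_self ht)

theorem neg_le_gronwallBound_of_hasDerivAt_riccatiField_projIcc {α : ℝ → ℝ} {r : ℝ}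
    (hα₀ : α a = -r) (hp : ∀ t ∈ Icc a b, 0 ≤ p t) (hq : ∀ t ∈ Icc a b, |q t| ≤ Q)
    (hl : ∀ t ∈ Icc a b, l t ≤ L) (hneg : ∀ t ∈ Icc a b, α t ≤ 0)
    (hα : ∀ t ∈ Icc a b, HasDerivAt α (riccatiField p q l t (projIcc (-M) 0 hM (α t))) t) :
    ∀ t ∈ Icc a b, -α t ≤ gronwallBound r Q L (t - a) := by
  refine le_gronwallBound_of_liminf_deriv_right_le (HasDerivAt.continuousOn hα).neg
    (fun t ht _ => ((hα t (Ico_subset_Icc_self ht)).neg.hasDerivWithinAt).liminf_right_slope_le)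
    (by rw [hα₀, neg_neg]) fun t ht => ?_
  have ht' := Ico_subset_Icc_self ht
  have hle : α t ≤ projIcc (-M) 0 hM (α t) := by
    rw [coe_projIcc, min_eq_right (hneg t ht')]
    exact le_max_right _ _
  exact neg_quadratic_le (hp t ht') (hq t ht') (hl t ht') hle (projIcc (-M) 0 hM (α t)).2.2

end Truncation

theorem exists_riccatiField_nonpos {p q l : ℝ → ℝ} {a b r : ℝ} (hab : a ≤ b) (hr : 0 ≤ r)
    (hp : ContinuousOn p (Icc a b)) (hq : ContinuousOn q (Icc a b))
    (hl : ContinuousOn l (Icc a b)) (hp₀ : ∀ t ∈ Icc a b, 0 ≤ p t)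
    (hl₀ : ∀ t ∈ Icc a b, 0 ≤ l t) :
    ∃ α : ℝ → ℝ, α a = -r ∧ (∀ t ∈ Icc a b, HasDerivAt α (riccatiField p q l t (α t)) t) ∧
      ∀ t ∈ Icc a b, α t ≤ 0 := by
  obtain ⟨P, hP⟩ := isCompact_Icc.exists_bound_of_continuousOn hp
  obtain ⟨Q, hQ⟩ := isCompact_Icc.exists_bound_of_continuousOn hq
  obtain ⟨L, hL⟩ := isCompact_Icc.exists_bound_of_continuousOn hl
  simp only [Real.norm_eq_abs] at hP hQ hL
  have ha : a ∈ Icc a b := left_mem_Icc.2 hab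
  have hQ₀ : 0 ≤ Q := (abs_nonneg _).trans (hQ a ha)
  have hL₀ : 0 ≤ L := (abs_nonneg _).trans (hL a ha)
  set M := gronwallBound r Q L (b - a)
  have hmono := gronwallBound_mono hr hL₀ hQ₀
  have hM : -M ≤ 0 :=
    neg_nonpos.2 (hr.trans (gronwallBound_x0 r Q L ▸ hmono (sub_nonneg.2 hab)))
  obtain ⟨α, hα₀, hα⟩ := exists_forall_mem_Icc_hasDerivAt_of_lipschitzWith hab (-r)
    (v := fun t x => riccatiField p q l t (projIcc (-M) 0 hM x))
    (fun t ht => lipschitzWith_riccatiField_projIcc hM (hP t ht) (hQ t ht))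
    (fun x => ((hp.mul continuousOn_const).add (hq.mul continuousOn_const)).sub hl)
    (fun t ht x => (abs_riccatiField_projIcc_le hM (hP t ht) (hQ t ht) (hL t ht) x).trans
      (Real.le_coe_toNNReal _))
  have hneg := nonpos_of_hasDerivAt_riccatiField_projIcc hM (by rw [hα₀]; linarith) hl₀ hα
  have hlow := neg_le_gronwallBound_of_hasDerivAt_riccatiField_projIcc hM hα₀ hp₀ hQ
    (fun t ht => (le_abs_self _).trans (hL t ht)) hneg hα
  have htrunc : ∀ t ∈ Icc a b, (projIcc (-M) 0 hM (α t) : ℝ) = α t := fun t ht =>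
    congrArg Subtype.val <| projIcc_of_mem hM
      ⟨neg_le.1 ((hlow t ht).trans (hmono (by linarith [ht.2]))), hneg t ht⟩
  exact ⟨α, hα₀, fun t ht => htrunc t ht ▸ hα t ht, hneg⟩

theorem eqOn_of_hasDerivAt_riccatiField {p q l α β : ℝ → ℝ} {a b : ℝ}
    (hp : ContinuousOn p (Icc a b)) (hq : ContinuousOn q (Icc a b))
    (hα : ∀ t ∈ Icc a b, HasDerivAt α (riccatiField p q l t (α t)) t)
    (hβ : ∀ t ∈ Icc a b, HasDerivAt β (riccatiField p q l t (β t)) t) (h₀ : α a = β a) :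
    EqOn α β (Icc a b) := by
  obtain ⟨P, hP⟩ := isCompact_Icc.exists_bound_of_continuousOn hp
  obtain ⟨Q, hQ⟩ := isCompact_Icc.exists_bound_of_continuousOn hq
  obtain ⟨A, hA⟩ := isCompact_Icc.exists_bound_of_continuousOn (HasDerivAt.continuousOn hα)
  obtain ⟨B, hB⟩ := isCompact_Icc.exists_bound_of_continuousOn (HasDerivAt.continuousOn hβ)
  have hK : ∀ γ : ℝ → ℝ, (∀ t ∈ Icc a b, ‖γ t‖ ≤ A ∨ ‖γ t‖ ≤ B) →
      ∀ t ∈ Ico a b, γ t ∈ closedBall 0 (max A B) := fun γ hγ t ht =>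
    mem_closedBall_zero_iff.2 (le_max_iff.2 (hγ t (Ico_subset_Icc_self ht)))
  exact ODE_solution_unique_of_mem_Icc_right
    (fun t ht => lipschitzOnWith_quadratic (M := max A B) (c := l t)
      (hP t (Ico_subset_Icc_self ht)) (hQ t (Ico_subset_Icc_self ht)))
    (HasDerivAt.continuousOn hα) (fun t ht => (hα t (Ico_subset_Icc_self ht)).hasDerivWithinAt)
    (hK α fun t ht => .inl (hA t ht))
    (HasDerivAt.continuousOn hβ) (fun t ht => (hβ t (Ico_subset_Icc_self ht)).hasDerivWithinAt)
    (hK β fun t ht => .inr (hB t ht)) h₀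

theorem riccati_global_existence_nonpos_general (T : ℝ) (hT : 0 < T) (r₁ r₂ : ℝ)
    (hr₁ : 0 ≤ r₁) (hr₂ : 0 ≤ r₂)
    (a f₂ l₁ l₂ m₁ b₁ : ℝ → ℝ)
    (ha : ContinuousOn a (Icc 0 T)) (hf₂ : ContinuousOn f₂ (Icc 0 T))
    (hl₁c : ContinuousOn l₁ (Icc 0 T)) (hl₂c : ContinuousOn l₂ (Icc 0 T))
    (hm₁c : ContinuousOn m₁ (Icc 0 T)) (hb₁c : ContinuousOn b₁ (Icc 0 T))
    (hl₁ : ∀ t ∈ Icc (0:ℝ) T, 0 ≤ l₁ t) (hl₂ : ∀ t ∈ Icc (0:ℝ) T, 0 ≤ l₂ t)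
    (hm₁ : ∀ t ∈ Icc (0:ℝ) T, 0 < m₁ t) :
    (∃ α : ℝ → ℝ, ContinuousOn α (Icc 0 T) ∧ α 0 = -(r₁ + r₂) ∧
      (∀ t ∈ Icc (0:ℝ) T, HasDerivAt α
        (b₁ t ^ 2 / m₁ t * α t ^ 2 + (2 * a t + f₂ t ^ 2) * α t - (l₁ t + l₂ t)) t) ∧
      (∀ t ∈ Icc (0:ℝ) T, α t ≤ 0))
    ∧ (∀ α α' : ℝ → ℝ,
        (α 0 = -(r₁ + r₂) ∧ ∀ t ∈ Icc (0:ℝ) T, HasDerivAt α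
          (b₁ t ^ 2 / m₁ t * α t ^ 2 + (2 * a t + f₂ t ^ 2) * α t - (l₁ t + l₂ t)) t) →
        (α' 0 = -(r₁ + r₂) ∧ ∀ t ∈ Icc (0:ℝ) T, HasDerivAt α'
          (b₁ t ^ 2 / m₁ t * α' t ^ 2 + (2 * a t + f₂ t ^ 2) * α' t - (l₁ t + l₂ t)) t) →
        EqOn α α' (Icc 0 T)) := by
  have hp : ContinuousOn (fun t => b₁ t ^ 2 / m₁ t) (Icc 0 T) :=
    (hb₁c.pow 2).div hm₁c fun t ht => (hm₁ t ht).ne'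
  have hq : ContinuousOn (fun t => 2 * a t + f₂ t ^ 2) (Icc 0 T) :=
    (continuousOn_const.mul ha).add (hf₂.pow 2)
  obtain ⟨α, hα₀, hα, hneg⟩ := exists_riccatiField_nonpos hT.le (add_nonneg hr₁ hr₂) hp hq
    (hl₁c.add hl₂c) (fun t ht => div_nonneg (sq_nonneg _) (hm₁ t ht).le)
    (fun t ht => add_nonneg (hl₁ t ht) (hl₂ t ht))
  exact ⟨⟨α, HasDerivAt.continuousOn hα, hα₀, hα, hneg⟩,
    fun α α' h h' => eqOn_of_hasDerivAt_riccatiField hp hq h.2 h'.2 (h.1.trans h'.1.symm)⟩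

theorem riccati_global_existence_nonpos (T : ℝ) (hT : 0 < T) (r₁ r₂ : ℝ)
    (hr₁ : 0 ≤ r₁) (hr₂ : 0 ≤ r₂)
    (a f₂ l₁ l₂ m₁ b₁ : ℝ → ℝ)
    (ha : ContinuousOn a (Icc 0 T)) (hf₂ : ContinuousOn f₂ (Icc 0 T))
    (hl₁c : ContinuousOn l₁ (Icc 0 T)) (hl₂c : ContinuousOn l₂ (Icc 0 T))
    (hm₁c : ContinuousOn m₁ (Icc 0 T)) (hb₁c : ContinuousOn b₁ (Icc 0 T))
    (haB : ∃ C, ∀ t ∈ Icc (0:ℝ) T, |a t| ≤ C)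
    (hf₂B : ∃ C, ∀ t ∈ Icc (0:ℝ) T, |f₂ t| ≤ C)
    (hl₁B : ∃ C, ∀ t ∈ Icc (0:ℝ) T, |l₁ t| ≤ C)
    (hl₂B : ∃ C, ∀ t ∈ Icc (0:ℝ) T, |l₂ t| ≤ C)
    (hb₁B : ∃ C, ∀ t ∈ Icc (0:ℝ) T, |b₁ t| ≤ C)
    (hl₁ : ∀ t ∈ Icc (0:ℝ) T, 0 ≤ l₁ t) (hl₂ : ∀ t ∈ Icc (0:ℝ) T, 0 ≤ l₂ t)
    (hm₁ : ∀ t ∈ Icc (0:ℝ) T, 0 < m₁ t) :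
    (∃ α : ℝ → ℝ, ContinuousOn α (Icc 0 T) ∧ α 0 = -(r₁ + r₂) ∧
      (∀ t ∈ Icc (0:ℝ) T, HasDerivAt α
        (b₁ t ^ 2 / m₁ t * α t ^ 2 + (2 * a t + f₂ t ^ 2) * α t - (l₁ t + l₂ t)) t) ∧
      (∀ t ∈ Icc (0:ℝ) T, α t ≤ 0))
    ∧ (∀ α α' : ℝ → ℝ,
        (α 0 = -(r₁ + r₂) ∧ ∀ t ∈ Icc (0:ℝ) T, HasDerivAt α
          (b₁ t ^ 2 / m₁ t * α t ^ 2 + (2 * a t + f₂ t ^ 2) * α t - (l₁ t + l₂ t)) t) →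
        (α' 0 = -(r₁ + r₂) ∧ ∀ t ∈ Icc (0:ℝ) T, HasDerivAt α'
          (b₁ t ^ 2 / m₁ t * α' t ^ 2 + (2 * a t + f₂ t ^ 2) * α' t - (l₁ t + l₂ t)) t) →
        EqOn α α' (Icc 0 T)) :=
  riccati_global_existence_nonpos_general T hT r₁ r₂ hr₁ hr₂ a f₂ l₁ l₂ m₁ b₁ ha hf₂ hl₁c hl₂c hm₁c
    hb₁c hl₁ hl₂ hm₁
end

section
/- Let a, b₁, b₂, m₁, m₂, l₁, l₂, k₁, k₂, n₁, n₂, c : [0,T] → ℝ be continuous with m₁, m₂ > 0, and r₁, r₂ ≥ 0, h₁, h₂ ∈ ℝ. Consider the two-point boundary value problem for (ȳ, x̄₁, x̄₂) : [0,T] → ℝ³: -ȳ' = aȳ + (b₁²/m₁)x̄₁ + (b₂²/m₂)x̄₂ + b₁n₁ + b₂n₂ + c, x̄₁' = ax̄₁ - l₁(ȳ - k₁), x̄₂' = ax̄₂ - l₂(ȳ - k₂), with ȳ(T) = ξ̄, x̄₁(0) = -r₁(ȳ(0) - h₁), x̄₂(0) = -r₂(ȳ(0) - h₂). If (ȳ,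 x̄₁, x̄₂) is a solution and we set n̄ = x̄₁ + x̄₂, then (ȳ, n̄) solves: -ȳ' = aȳ + (b₁²/m₁)n̄ + b₁n₁ + b₂n₂ + c, n̄' = an̄ - (l₁+l₂)ȳ + l₁k₁ + l₂k₂, ȳ(T) = ξ̄, n̄(0) = -(r₁+r₂)ȳ(0) + r₁h₁ + r₂h₂, provided b₁²/m₁ = b₂²/m₂ pointwise. Conversely, given a solution (ȳ, n̄) of the reduced system, defining x̄₁, x̄₂ as the unique solutions of the linear initial value problems x̄ᵢ' = ax̄ᵢ - lᵢ(ȳ - kᵢ), x̄ᵢ(0) = -rᵢ(ȳ(0)-hᵢ), one has x̄₁ + x̄₂ = n̄. -/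
/-!
Adding the equations for x̄₁ and x̄₂ gives the equation for n̄ = x̄₁ + x̄₂, and the symmetry
b₁²/m₁ = b₂²/m₂ merges the two coupling terms of the backward equation into one. Conversely,
x̄₁ + x̄₂ and n̄ solve the same scalar linear initial value problem, which has at most one solution:
a continuous coefficient is bounded on a compact interval, so the right-hand side is uniformly
Lipschitz in the state and Grönwall uniqueness applies.
-/

open Set

theorem eqOn_Icc_of_hasDerivAt_linear {E : Type*} [NormedAddCommGroup E] [NormedSpace ℝ E]
    {a b : ℝ} {p : ℝ → ℝ} {q f g : ℝ → E} (hp : ContinuousOn p (Icc a b))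
    (hf : ∀ t ∈ Icc a b, HasDerivAt f (p t • f t + q t) t)
    (hg : ∀ t ∈ Icc a b, HasDerivAt g (p t • g t + q t) t) (h₀ : f a = g a) :
    EqOn f g (Icc a b) := by
  obtain ⟨C, hC⟩ := isCompact_Icc.exists_bound_of_continuousOn hp
  have hlip (t : ℝ) (ht : t ∈ Ico a b) :
      LipschitzOnWith C.toNNReal (fun x : E ↦ p t • x + q t) univ := by
    have hpC : ‖p t‖₊ + 0 ≤ C.toNNReal := by
      rw [add_zero, ← NNReal.coe_le_coe, coe_nnnorm]
      exact (hC t (Ico_subset_Icc_self ht)).trans (le_max_left _ _)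
    exact (((lipschitzWith_smul (p t)).add (LipschitzWith.const (q t))).weaken hpC).lipschitzOnWith
  exact ODE_solution_unique_of_mem_Icc_right hlip
    (fun t ht ↦ (hf t ht).continuousAt.continuousWithinAt)
    (fun t ht ↦ (hf t (Ico_subset_Icc_self ht)).hasDerivWithinAt) (fun _ _ ↦ mem_univ _)
    (fun t ht ↦ (hg t ht).continuousAt.continuousWithinAt)
    (fun t ht ↦ (hg t (Ico_subset_Icc_self ht)).hasDerivWithinAt) (fun _ _ ↦ mem_univ _) h₀

theorem hasDerivAt_add_of_linear_feedback {a l₁ l₂ k₁ k₂ y x₁ x₂ : ℝ → ℝ} {t : ℝ}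
    (h₁ : HasDerivAt x₁ (a t * x₁ t - l₁ t * (y t - k₁ t)) t)
    (h₂ : HasDerivAt x₂ (a t * x₂ t - l₂ t * (y t - k₂ t)) t) :
    HasDerivAt (fun s ↦ x₁ s + x₂ s)
      (a t * (x₁ t + x₂ t) - (l₁ t + l₂ t) * y t + l₁ t * k₁ t + l₂ t * k₂ t) t :=
  (h₁.add h₂).congr_deriv (by ring)

theorem bvp_reduction_general (T : ℝ) (r₁ r₂ h₁ h₂ ξo : ℝ)
    (a b₁ b₂ m₁ m₂ l₁ l₂ k₁ k₂ n₁ n₂ c : ℝ → ℝ)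
    (ha : ContinuousOn a (Icc 0 T))
    (hsym : ∀ t ∈ Icc (0:ℝ) T, b₁ t ^ 2 / m₁ t = b₂ t ^ 2 / m₂ t) :
    -- forward direction: a solution of the full system yields a solution of the
    -- reduced system via nb = xb₁ + xb₂
    (∀ yb xb₁ xb₂ : ℝ → ℝ,
      (∀ t ∈ Icc (0:ℝ) T, HasDerivAt yb
        (-(a t * yb t + b₁ t ^ 2 / m₁ t * xb₁ t + b₂ t ^ 2 / m₂ t * xb₂ t
          + b₁ t * n₁ t + b₂ t * n₂ t + c t)) t) →
      (∀ t ∈ Icc (0:ℝ) T, HasDerivAt xb₁ (a t * xb₁ t - l₁ t * (yb t - k₁ t)) t) →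
      (∀ t ∈ Icc (0:ℝ) T, HasDerivAt xb₂ (a t * xb₂ t - l₂ t * (yb t - k₂ t)) t) →
      yb T = ξo → xb₁ 0 = -r₁ * (yb 0 - h₁) → xb₂ 0 = -r₂ * (yb 0 - h₂) →
      ((∀ t ∈ Icc (0:ℝ) T, HasDerivAt yb
        (-(a t * yb t + b₁ t ^ 2 / m₁ t * (xb₁ t + xb₂ t)
          + b₁ t * n₁ t + b₂ t * n₂ t + c t)) t) ∧
       (∀ t ∈ Icc (0:ℝ) T, HasDerivAt (fun s => xb₁ s + xb₂ s)
        (a t * (xb₁ t + xb₂ t) - (l₁ t + l₂ t) * yb t + l₁ t * k₁ t + l₂ t * k₂ t) t) ∧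
       yb T = ξo ∧ xb₁ 0 + xb₂ 0 = -(r₁ + r₂) * yb 0 + r₁ * h₁ + r₂ * h₂))
    ∧
    -- converse: from a solution of the reduced system and the two linear IVPs,
    -- the sum of the components recovers nb
    (∀ yb nb xb₁ xb₂ : ℝ → ℝ,
      (∀ t ∈ Icc (0:ℝ) T, HasDerivAt yb
        (-(a t * yb t + b₁ t ^ 2 / m₁ t * nb t
          + b₁ t * n₁ t + b₂ t * n₂ t + c t)) t) →
      (∀ t ∈ Icc (0:ℝ) T, HasDerivAt nb
        (a t * nb t - (l₁ t + l₂ t) * yb t + l₁ t * k₁ t + l₂ t * k₂ t) t) →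
      yb T = ξo → nb 0 = -(r₁ + r₂) * yb 0 + r₁ * h₁ + r₂ * h₂ →
      (∀ t ∈ Icc (0:ℝ) T, HasDerivAt xb₁ (a t * xb₁ t - l₁ t * (yb t - k₁ t)) t) →
      (∀ t ∈ Icc (0:ℝ) T, HasDerivAt xb₂ (a t * xb₂ t - l₂ t * (yb t - k₂ t)) t) →
      xb₁ 0 = -r₁ * (yb 0 - h₁) → xb₂ 0 = -r₂ * (yb 0 - h₂) →
      ∀ t ∈ Icc (0:ℝ) T, xb₁ t + xb₂ t = nb t) := by
  constructor
  · intro yb xb₁ xb₂ hyb hx₁ hx₂ hybT hx₁0 hx₂0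
    refine ⟨fun t ht ↦ ?_, fun t ht ↦ hasDerivAt_add_of_linear_feedback (hx₁ t ht) (hx₂ t ht),
      hybT, by rw [hx₁0, hx₂0]; ring⟩
    exact (hyb t ht).congr_deriv (by rw [← hsym t ht]; ring)
  · intro yb nb xb₁ xb₂ _ hnb _ hnb0 hx₁ hx₂ hx₁0 hx₂0
    have hsum : ∀ t ∈ Icc (0:ℝ) T, HasDerivAt (fun s ↦ xb₁ s + xb₂ s)
        (a t • (xb₁ t + xb₂ t) + (l₁ t * k₁ t + l₂ t * k₂ t - (l₁ t + l₂ t) * yb t)) t :=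
      fun t ht ↦ (hasDerivAt_add_of_linear_feedback (hx₁ t ht) (hx₂ t ht)).congr_deriv
        (by rw [smul_eq_mul]; ring)
    have hnb' : ∀ t ∈ Icc (0:ℝ) T, HasDerivAt nb
        (a t • nb t + (l₁ t * k₁ t + l₂ t * k₂ t - (l₁ t + l₂ t) * yb t)) t :=
      fun t ht ↦ (hnb t ht).congr_deriv (by rw [smul_eq_mul]; ring)
    exact eqOn_Icc_of_hasDerivAt_linear ha hsum hnb' (by rw [hx₁0, hx₂0, hnb0]; ring)

theorem bvp_reduction (T : ℝ) (hT : 0 < T) (r₁ r₂ h₁ h₂ ξo : ℝ)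
    (hr₁ : 0 ≤ r₁) (hr₂ : 0 ≤ r₂)
    (a b₁ b₂ m₁ m₂ l₁ l₂ k₁ k₂ n₁ n₂ c : ℝ → ℝ)
    (ha : ContinuousOn a (Icc 0 T)) (hb₁ : ContinuousOn b₁ (Icc 0 T))
    (hb₂ : ContinuousOn b₂ (Icc 0 T)) (hm₁c : ContinuousOn m₁ (Icc 0 T))
    (hm₂c : ContinuousOn m₂ (Icc 0 T)) (hl₁ : ContinuousOn l₁ (Icc 0 T))
    (hl₂ : ContinuousOn l₂ (Icc 0 T)) (hk₁ : ContinuousOn k₁ (Icc 0 T))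
    (hk₂ : ContinuousOn k₂ (Icc 0 T)) (hn₁ : ContinuousOn n₁ (Icc 0 T))
    (hn₂ : ContinuousOn n₂ (Icc 0 T)) (hc : ContinuousOn c (Icc 0 T))
    (hm₁ : ∀ t ∈ Icc (0:ℝ) T, 0 < m₁ t) (hm₂ : ∀ t ∈ Icc (0:ℝ) T, 0 < m₂ t)
    (hsym : ∀ t ∈ Icc (0:ℝ) T, b₁ t ^ 2 / m₁ t = b₂ t ^ 2 / m₂ t) :
    -- forward direction: a solution of the full system yields a solution of the
    -- reduced system via nb = xb₁ + xb₂
    (∀ yb xb₁ xb₂ : ℝ → ℝ,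
      (∀ t ∈ Icc (0:ℝ) T, HasDerivAt yb
        (-(a t * yb t + b₁ t ^ 2 / m₁ t * xb₁ t + b₂ t ^ 2 / m₂ t * xb₂ t
          + b₁ t * n₁ t + b₂ t * n₂ t + c t)) t) →
      (∀ t ∈ Icc (0:ℝ) T, HasDerivAt xb₁ (a t * xb₁ t - l₁ t * (yb t - k₁ t)) t) →
      (∀ t ∈ Icc (0:ℝ) T, HasDerivAt xb₂ (a t * xb₂ t - l₂ t * (yb t - k₂ t)) t) →
      yb T = ξo → xb₁ 0 = -r₁ * (yb 0 - h₁) → xb₂ 0 = -r₂ * (yb 0 - h₂) →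
      ((∀ t ∈ Icc (0:ℝ) T, HasDerivAt yb
        (-(a t * yb t + b₁ t ^ 2 / m₁ t * (xb₁ t + xb₂ t)
          + b₁ t * n₁ t + b₂ t * n₂ t + c t)) t) ∧
       (∀ t ∈ Icc (0:ℝ) T, HasDerivAt (fun s => xb₁ s + xb₂ s)
        (a t * (xb₁ t + xb₂ t) - (l₁ t + l₂ t) * yb t + l₁ t * k₁ t + l₂ t * k₂ t) t) ∧
       yb T = ξo ∧ xb₁ 0 + xb₂ 0 = -(r₁ + r₂) * yb 0 + r₁ * h₁ + r₂ * h₂))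
    ∧
    -- converse: from a solution of the reduced system and the two linear IVPs,
    -- the sum of the components recovers nb
    (∀ yb nb xb₁ xb₂ : ℝ → ℝ,
      (∀ t ∈ Icc (0:ℝ) T, HasDerivAt yb
        (-(a t * yb t + b₁ t ^ 2 / m₁ t * nb t
          + b₁ t * n₁ t + b₂ t * n₂ t + c t)) t) →
      (∀ t ∈ Icc (0:ℝ) T, HasDerivAt nb
        (a t * nb t - (l₁ t + l₂ t) * yb t + l₁ t * k₁ t + l₂ t * k₂ t) t) →
      yb T = ξo → nb 0 = -(r₁ + r₂) * yb 0 + r₁ * h₁ + r₂ * h₂ →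
      (∀ t ∈ Icc (0:ℝ) T, HasDerivAt xb₁ (a t * xb₁ t - l₁ t * (yb t - k₁ t)) t) →
      (∀ t ∈ Icc (0:ℝ) T, HasDerivAt xb₂ (a t * xb₂ t - l₂ t * (yb t - k₂ t)) t) →
      xb₁ 0 = -r₁ * (yb 0 - h₁) → xb₂ 0 = -r₂ * (yb 0 - h₂) →
      ∀ t ∈ Icc (0:ℝ) T, xb₁ t + xb₂ t = nb t) :=
  bvp_reduction_general T r₁ r₂ h₁ h₂ ξo a b₁ b₂ m₁ m₂ l₁ l₂ k₁ k₂ n₁ n₂ c ha hsym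
end

section
/- Let κ : [0,T] → ℝ be continuous and let τ₁ solve the Riccati equation τ₁' = (b₂²/m₂)τ₁² + 2aτ₁ - l₂ on [0,T] with τ₁(0) = -r₂, where b₂, m₂, a, l₂ : [0,T] → ℝ are continuous, m₂ > 0, l₂ ≥ 0, r₂ ≥ 0. Then τ₁(t) ≤ 0 for all t ∈ [0,T], and if r₂ > 0 or l₂ > 0 pointwise on an initial interval, then τ₁(t) < 0 for all t ∈ (0,T]. -/
/-
Write the Riccati equation as the linear equation `τ' = g τ - l` with coefficient
`g = (b²/m) τ + 2a`, which is continuous because `τ` is. Multiplying by the positive integrating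
factor `E = exp (-∫ g)` gives `(τ E)' = -l E ≤ 0`, so `τ E` decreases from `τ(0) = -r ≤ 0`; it
decreases strictly wherever `l > 0`. Since `E > 0`, `τ` has the sign of `τ E`.
-/

open Set Real

theorem exists_integratingFactor {g : ℝ → ℝ} {a b : ℝ} (hab : a ≤ b)
    (hg : ContinuousOn g (Icc a b)) :
    ∃ E : ℝ → ℝ, (∀ t, 0 < E t) ∧ ∀ t ∈ Icc a b, HasDerivAt E (-(g t * E t)) t := by
  set G := IccExtend hab ((Icc a b).domRestrict g)
  have hG : Continuous G :=
    continuous_IccExtend_iff.mpr (continuousOn_iff_continuous_domRestrict.mp hg)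
  refine ⟨fun t => exp (-∫ x in a..t, G x), fun t => exp_pos _, fun t ht => ?_⟩
  have hGt : G t = g t := IccExtend_of_mem hab _ ht
  simpa [hGt, mul_comm] using ((hG.integral_hasStrictDerivAt a t).hasDerivAt.neg).exp

section LinearODE

variable {g l y E : ℝ → ℝ} {a b : ℝ}

theorem hasDerivAt_mul_integratingFactor {t : ℝ} (hy : HasDerivAt y (g t * y t - l t) t)
    (hE : HasDerivAt E (-(g t * E t)) t) :
    HasDerivAt (fun s => y s * E s) (-(l t * E t)) t :=
  (hy.mul hE).congr_deriv (by ring)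

theorem antitoneOn_mul_integratingFactor (hE₀ : ∀ t, 0 < E t)
    (hE : ∀ t ∈ Icc a b, HasDerivAt E (-(g t * E t)) t)
    (hy : ∀ t ∈ Icc a b, HasDerivAt y (g t * y t - l t) t)
    (hl : ∀ t ∈ Icc a b, 0 ≤ l t) :
    AntitoneOn (fun s => y s * E s) (Icc a b) := by
  have hyE := fun t ht => hasDerivAt_mul_integratingFactor (hy t ht) (hE t ht)
  refine antitoneOn_of_hasDerivWithinAt_nonpos (convex_Icc a b) (HasDerivAt.continuousOn hyE)
    (fun t ht => (hyE t (interior_subset ht)).hasDerivWithinAt) fun t ht => ?_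
  exact neg_nonpos.2 (mul_nonneg (hl t (interior_subset ht)) (hE₀ t).le)

theorem strictAntiOn_mul_integratingFactor (hE₀ : ∀ t, 0 < E t)
    (hE : ∀ t ∈ Icc a b, HasDerivAt E (-(g t * E t)) t)
    (hy : ∀ t ∈ Icc a b, HasDerivAt y (g t * y t - l t) t)
    (hl : ∀ t ∈ Ioo a b, 0 < l t) :
    StrictAntiOn (fun s => y s * E s) (Icc a b) := by
  have hyE := fun t ht => hasDerivAt_mul_integratingFactor (hy t ht) (hE t ht)
  refine strictAntiOn_of_hasDerivWithinAt_neg (convex_Icc a b) (HasDerivAt.continuousOn hyE)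
    (fun t ht => (hyE t (interior_subset ht)).hasDerivWithinAt) fun t ht => ?_
  rw [interior_Icc] at ht
  exact neg_neg_of_pos (mul_pos (hl t ht) (hE₀ t))

theorem nonpos_of_hasDerivAt_linear (hg : ContinuousOn g (Icc a b))
    (hl : ∀ t ∈ Icc a b, 0 ≤ l t) (hy : ∀ t ∈ Icc a b, HasDerivAt y (g t * y t - l t) t)
    (hya : y a ≤ 0) : ∀ t ∈ Icc a b, y t ≤ 0 := by
  intro t ht
  have hab : a ≤ b := ht.1.trans ht.2
  obtain ⟨E, hE₀, hE⟩ := exists_integratingFactor hab hg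
  have hdecr : y t * E t ≤ y a * E a :=
    antitoneOn_mul_integratingFactor hE₀ hE hy hl (left_mem_Icc.2 hab) ht ht.1
  exact nonpos_of_mul_nonpos_left (hdecr.trans (mul_nonpos_of_nonpos_of_nonneg hya (hE₀ a).le))
    (hE₀ t)

theorem neg_of_hasDerivAt_linear (hg : ContinuousOn g (Icc a b))
    (hl : ∀ t ∈ Icc a b, 0 ≤ l t) (hy : ∀ t ∈ Icc a b, HasDerivAt y (g t * y t - l t) t)
    (hya : y a ≤ 0) (hstart : y a < 0 ∨ ∃ c > a, ∀ t ∈ Ioo a c, 0 < l t) :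
    ∀ t ∈ Ioc a b, y t < 0 := by
  intro t ht
  have hab : a ≤ b := ht.1.le.trans ht.2
  obtain ⟨E, hE₀, hE⟩ := exists_integratingFactor hab hg
  have hanti := antitoneOn_mul_integratingFactor hE₀ hE hy hl
  suffices hyEt : y t * E t < 0 from (neg_iff_pos_of_mul_neg hyEt).mpr (hE₀ t)
  rcases hstart with hya | ⟨c, hac, hlc⟩
  · exact (hanti (left_mem_Icc.2 hab) (Ioc_subset_Icc_self ht) ht.1.le).trans_lt
      (mul_neg_of_neg_of_pos hya (hE₀ a))
  · set s := min c t
    have has : a < s := lt_min hac ht.1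
    have hsub : Icc a s ⊆ Icc a b := Icc_subset_Icc_right ((min_le_right c t).trans ht.2)
    have hstrict := strictAntiOn_mul_integratingFactor hE₀ (fun u hu => hE u (hsub hu))
      (fun u hu => hy u (hsub hu)) (fun u hu => hlc u ⟨hu.1, hu.2.trans_le (min_le_left c t)⟩)
    calc y t * E t ≤ y s * E s :=
          hanti (hsub (right_mem_Icc.2 has.le)) (Ioc_subset_Icc_self ht) (min_le_right c t)
      _ < y a * E a := hstrict (left_mem_Icc.2 has.le) (right_mem_Icc.2 has.le) has
      _ ≤ 0 := mul_nonpos_of_nonpos_of_nonneg hya (hE₀ a).le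

end LinearODE

theorem tau1_nonpositive_general (T : ℝ) (r₂ : ℝ) (hr₂ : 0 ≤ r₂)
    (a b₂ m₂ l₂ τ₁ : ℝ → ℝ)
    (ha : ContinuousOn a (Icc 0 T)) (hb₂ : ContinuousOn b₂ (Icc 0 T))
    (hm₂c : ContinuousOn m₂ (Icc 0 T))
    (hm₂ : ∀ t ∈ Icc (0:ℝ) T, 0 < m₂ t) (hl₂ : ∀ t ∈ Icc (0:ℝ) T, 0 ≤ l₂ t)
    (hτ₁0 : τ₁ 0 = -r₂)
    (hτ₁ : ∀ t ∈ Icc (0:ℝ) T, HasDerivAt τ₁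
      (b₂ t ^ 2 / m₂ t * τ₁ t ^ 2 + 2 * a t * τ₁ t - l₂ t) t) :
    (∀ t ∈ Icc (0:ℝ) T, τ₁ t ≤ 0) ∧
    ((0 < r₂ ∨ ∃ ε > 0, ∀ t ∈ Icc (0:ℝ) ε, 0 < l₂ t) →
      ∀ t ∈ Ioc (0:ℝ) T, τ₁ t < 0) := by
  set g : ℝ → ℝ := fun t => b₂ t ^ 2 / m₂ t * τ₁ t + 2 * a t
  have hg : ContinuousOn g (Icc 0 T) :=
    (((hb₂.pow 2).div hm₂c fun t ht => (hm₂ t ht).ne').mul (HasDerivAt.continuousOn hτ₁)).add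
      (continuousOn_const.mul ha)
  have hτ : ∀ t ∈ Icc (0:ℝ) T, HasDerivAt τ₁ (g t * τ₁ t - l₂ t) t :=
    fun t ht => (hτ₁ t ht).congr_deriv (by ring)
  have hτ0 : τ₁ 0 ≤ 0 := hτ₁0 ▸ neg_nonpos.2 hr₂
  refine ⟨nonpos_of_hasDerivAt_linear hg hl₂ hτ hτ0,
    fun hstart => neg_of_hasDerivAt_linear hg hl₂ hτ hτ0 ?_⟩
  rcases hstart with hr | ⟨ε, hε, hlε⟩
  · exact Or.inl (hτ₁0 ▸ neg_neg_of_pos hr)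
  · exact Or.inr ⟨ε, hε, fun t ht => hlε t (Ioo_subset_Icc_self ht)⟩

theorem tau1_nonpositive (T : ℝ) (hT : 0 < T) (r₂ : ℝ) (hr₂ : 0 ≤ r₂)
    (a b₂ m₂ l₂ τ₁ : ℝ → ℝ)
    (ha : ContinuousOn a (Icc 0 T)) (hb₂ : ContinuousOn b₂ (Icc 0 T))
    (hm₂c : ContinuousOn m₂ (Icc 0 T)) (hl₂c : ContinuousOn l₂ (Icc 0 T))
    (hm₂ : ∀ t ∈ Icc (0:ℝ) T, 0 < m₂ t) (hl₂ : ∀ t ∈ Icc (0:ℝ) T, 0 ≤ l₂ t)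
    (hτ₁0 : τ₁ 0 = -r₂)
    (hτ₁ : ∀ t ∈ Icc (0:ℝ) T, HasDerivAt τ₁
      (b₂ t ^ 2 / m₂ t * τ₁ t ^ 2 + 2 * a t * τ₁ t - l₂ t) t) :
    (∀ t ∈ Icc (0:ℝ) T, τ₁ t ≤ 0) ∧
    ((0 < r₂ ∨ ∃ ε > 0, ∀ t ∈ Icc (0:ℝ) ε, 0 < l₂ t) →
      ∀ t ∈ Ioc (0:ℝ) T, τ₁ t < 0) :=
  tau1_nonpositive_general T r₂ hr₂ a b₂ m₂ l₂ τ₁ ha hb₂ hm₂c hm₂ hl₂ hτ₁0 hτ₁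
end

section
/- Let α, γ₁ : [0,T] → ℝ be the solutions on [0,T] of the Riccati equations α' = qα² + (2a+f₂²)α - (l₁+l₂), α(0) = -(r₁+r₂), and γ₁' = qγ₁² + (2a+f₂²)γ₁ - l₁, γ₁(0) = -r₁, where q, a, f₂, l₁, l₂ : [0,T] → ℝ are continuous with q ≥ 0, l₁, l₂ ≥ 0, and r₁, r₂ ≥ 0. Then α(t) ≤ γ₁(t) ≤ 0 for all t ∈ [0,T]. -/
open Set

/-- Helper: if `u 0 ≤ 0` and `u' t ≤ g t * u t` on `[0,T]` with `g` continuous,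
then `u ≤ 0` on `[0,T]`. -/
lemma nonpos_of_self_bound (T : ℝ) (u g u' : ℝ → ℝ)
    (hu : ContinuousOn u (Icc 0 T))
    (hg : ContinuousOn g (Icc 0 T))
    (hu0 : u 0 ≤ 0)
    (hd : ∀ t ∈ Icc (0:ℝ) T, HasDerivAt u (u' t) t)
    (hle : ∀ t ∈ Icc (0:ℝ) T, u' t ≤ g t * u t) :
    ∀ t ∈ Icc (0:ℝ) T, u t ≤ 0 := by
  obtain ⟨K₀, hK₀⟩ := (isCompact_Icc (a := (0:ℝ)) (b := T)).exists_bound_of_continuousOn hg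
  set K := |K₀| with hKdef
  have hK : ∀ x ∈ Icc (0:ℝ) T, ‖g x‖ ≤ K := fun x hx => (hK₀ x hx).trans (le_abs_self _)
  have hKnonneg : 0 ≤ K := abs_nonneg _
  have key : ∀ ε > 0, ∀ t ∈ Icc (0:ℝ) T, u t ≤ ε * Real.exp ((K + 1) * t) := by
    intro ε hε
    have hB : ∀ x : ℝ, HasDerivAt (fun t => ε * Real.exp ((K + 1) * t))
        (ε * ((K + 1) * Real.exp ((K + 1) * x))) x := by
      intro x
      have h1 : HasDerivAt (fun t : ℝ => (K + 1) * t) (K + 1) x := by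
        simpa using (hasDerivAt_id x).const_mul (K + 1)
      have h2 := h1.exp
      simpa [mul_comm] using h2.const_mul ε
    intro t ht
    refine image_le_of_deriv_right_lt_deriv_boundary hu
      (fun x hx => (hd x (Ico_subset_Icc_self hx)).hasDerivWithinAt) ?_ hB ?_ ht
    · have : (0:ℝ) < ε * Real.exp ((K + 1) * 0) := by positivity
      linarith
    · intro x hx heq
      have hx' : x ∈ Icc (0:ℝ) T := Ico_subset_Icc_self hx
      have hBpos : 0 < ε * Real.exp ((K + 1) * x) := by positivity
      have hupos : 0 < u x := heq ▸ hBpos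
      have hgK : g x ≤ K := le_trans (le_abs_self _) (hK x hx')
      calc u' x ≤ g x * u x := hle x hx'
        _ ≤ K * u x := by nlinarith
        _ = K * (ε * Real.exp ((K + 1) * x)) := by rw [heq]
        _ < ε * ((K + 1) * Real.exp ((K + 1) * x)) := by nlinarith
  intro t ht
  by_contra hpos
  push_neg at hpos
  have hE : 0 < Real.exp ((K + 1) * t) := Real.exp_pos _
  have h2 := key (u t / (2 * Real.exp ((K + 1) * t))) (by positivity) t ht
  have heq : u t / (2 * Real.exp ((K + 1) * t)) * Real.exp ((K + 1) * t) = u t / 2 := by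
    field_simp
  rw [heq] at h2
  linarith

theorem riccati_comparison (T : ℝ) (hT : 0 < T) (r₁ r₂ : ℝ)
    (hr₁ : 0 ≤ r₁) (hr₂ : 0 ≤ r₂)
    (q a f₂ l₁ l₂ α γ₁ : ℝ → ℝ)
    (hqc : ContinuousOn q (Icc 0 T)) (ha : ContinuousOn a (Icc 0 T))
    (hf₂ : ContinuousOn f₂ (Icc 0 T)) (hl₁c : ContinuousOn l₁ (Icc 0 T))
    (hl₂c : ContinuousOn l₂ (Icc 0 T))
    (hq : ∀ t ∈ Icc (0:ℝ) T, 0 ≤ q t)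
    (hl₁ : ∀ t ∈ Icc (0:ℝ) T, 0 ≤ l₁ t) (hl₂ : ∀ t ∈ Icc (0:ℝ) T, 0 ≤ l₂ t)
    (hα0 : α 0 = -(r₁ + r₂)) (hγ₁0 : γ₁ 0 = -r₁)
    (hα : ∀ t ∈ Icc (0:ℝ) T, HasDerivAt α
      (q t * α t ^ 2 + (2 * a t + f₂ t ^ 2) * α t - (l₁ t + l₂ t)) t)
    (hγ₁ : ∀ t ∈ Icc (0:ℝ) T, HasDerivAt γ₁
      (q t * γ₁ t ^ 2 + (2 * a t + f₂ t ^ 2) * γ₁ t - l₁ t) t) :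
    ∀ t ∈ Icc (0:ℝ) T, α t ≤ γ₁ t ∧ γ₁ t ≤ 0 := by
  have hαc : ContinuousOn α (Icc 0 T) := fun t ht =>
    ((hα t ht).continuousAt).continuousWithinAt
  have hγc : ContinuousOn γ₁ (Icc 0 T) := fun t ht =>
    ((hγ₁ t ht).continuousAt).continuousWithinAt
  -- γ₁ ≤ 0
  have hγneg : ∀ t ∈ Icc (0:ℝ) T, γ₁ t ≤ 0 := by
    apply nonpos_of_self_bound T γ₁ (fun t => q t * γ₁ t + (2 * a t + f₂ t ^ 2))
      (fun t => q t * γ₁ t ^ 2 + (2 * a t + f₂ t ^ 2) * γ₁ t - l₁ t) hγc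
    · exact ((hqc.mul hγc).add ((continuousOn_const.mul ha).add (hf₂.pow 2)))
    · rw [hγ₁0]; linarith
    · exact hγ₁
    · intro t ht
      have := hl₁ t ht
      nlinarith [sq_nonneg (γ₁ t)]
  -- α ≤ γ₁
  have hαγ : ∀ t ∈ Icc (0:ℝ) T, α t - γ₁ t ≤ 0 := by
    apply nonpos_of_self_bound T (fun t => α t - γ₁ t)
      (fun t => q t * (α t + γ₁ t) + (2 * a t + f₂ t ^ 2))
      (fun t => (q t * α t ^ 2 + (2 * a t + f₂ t ^ 2) * α t - (l₁ t + l₂ t)) -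
        (q t * γ₁ t ^ 2 + (2 * a t + f₂ t ^ 2) * γ₁ t - l₁ t))
    · exact hαc.sub hγc
    · exact ((hqc.mul (hαc.add hγc)).add ((continuousOn_const.mul ha).add (hf₂.pow 2)))
    · rw [hα0, hγ₁0]; linarith
    · intro t ht
      exact (hα t ht).sub (hγ₁ t ht)
    · intro t ht
      have := hl₂ t ht
      nlinarith
  intro t ht
  exact ⟨by linarith [hαγ t ht], hγneg t ht⟩
end
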